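/- (Invariant set for PPGD) Let $G: \mathbb{H} \to \mathbb{R}$ be strongly convex with locally Lipschitz derivative with respect to $\|\cdot\|_{\mathcal{L}}$, with unique minimizer $u$. Set $d_0 = \|v_0 - u\|_{\mathcal{L}}$, $B = \{v : \|v-u\|_{\mathcal{L}} \le d_0\}$, and let $C_1^B, C_2^B$ be constants such that the dual trap $\langle \delta G(v) - \delta G(w), v - w\rangle \ge C_1^B\|v-w\|_{\mathcal{L}}^2 + C_2^B\|\delta G(v) - \delta G(w)\|_{\mathcal{L}^{-1}}^2$ holds on $B$. Define iterates $v_{k+1} = v_k - s\mathcal{L}^{-1}(\delta G(v_k) + \eta_k)$ with $0 < s \le \min\{C_2^B, 1/C_1^B\}$ and $\|\eta_k\|_{\mathcal{L}^{-1}}^2 \le (1/C_1^B + 5C_2^B/4)^{-1} d_0^2 C_1^B$ for all $k$. Then $\|v_k - u\|_{\mathcal{L}} \le d_0$ for all $k \in \mathbb{N}$. -/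
import Mathlib

set_option maxHeartbeats 1000000


/-- invariant set for PPGD: Under the dual trap on
`B = {v : ‖v − u‖_L ≤ d₀}`, with step size `0 < s ≤ min{C₂ᴮ, 1/C₁ᴮ}` and
perturbations satisfying `‖η_k‖²_{L⁻¹} ≤ (1/C₁ᴮ + 5C₂ᴮ/4)⁻¹ d₀² C₁ᴮ`, the
PPGD iterates `v_{k+1} = v_k − s L⁻¹(δG v_k + η_k)` satisfy
`‖v_k − u‖_L ≤ d₀` for all `k`. -/
theorem stmt10
    {H : Type*} [NormedAddCommGroup H] [InnerProductSpace ℝ H] [CompleteSpace H]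
    [TopologicalSpace.SeparableSpace H]
    (L : H →L[ℝ] H →L[ℝ] ℝ) (Linv : (H →L[ℝ] ℝ) →L[ℝ] H)
    (hLinv₁ : ∀ φ : H →L[ℝ] ℝ, L (Linv φ) = φ)
    (hLinv₂ : ∀ w : H, Linv (L w) = w)
    (C₁ C₂ : ℝ) (hC₁ : 0 < C₁)
    (hsym : ∀ w z : H, L w z = L z w)
    (hcont : ∀ w z : H, L w z ≤ C₂ * ‖w‖ * ‖z‖)
    (hcoer : ∀ w : H, C₁ * ‖w‖ ^ 2 ≤ L w w)
    (G : H → ℝ) (δG : H → H →L[ℝ] ℝ)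
    (hG : ∀ w : H, HasFDerivAt G (δG w) w)
    (μ : ℝ) (hμ : 0 < μ)
    (hconv : ∀ w z : H, μ * L (w - z) (w - z) ≤ (δG w - δG z) (w - z))
    -- `u` is the (unique) minimizer, so `δG u = 0`:
    (u : H) (hmin : ∀ w : H, G u ≤ G w) (hcrit : δG u = 0)
    -- initial guess and iterates:
    (v : ℕ → H) (η : ℕ → H →L[ℝ] ℝ) (s : ℝ) (hs : 0 < s)
    (C₁B C₂B : ℝ) (hC₁B : 0 < C₁B) (hC₂B : 0 < C₂B)
    -- dual trap on `B = {w : ‖w − u‖_L ≤ d₀}` with `d₀ = ‖v₀ − u‖_L`: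
    (hdualtrap : ∀ w z : H,
      Real.sqrt (L (w - u) (w - u)) ≤ Real.sqrt (L (v 0 - u) (v 0 - u)) →
      Real.sqrt (L (z - u) (z - u)) ≤ Real.sqrt (L (v 0 - u) (v 0 - u)) →
      C₁B * L (w - z) (w - z) +
          C₂B * ((δG w - δG z) (Linv (δG w - δG z))) ≤
        (δG w - δG z) (w - z))
    -- PPGD iteration:
    (hiter : ∀ k : ℕ, v (k + 1) = v k - s • Linv (δG (v k) + η k))
    -- step size restriction:
    (hstep : s ≤ min C₂B (1 / C₁B))
    -- uniform smallness of perturbations: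
    (hpert : ∀ k : ℕ,
      (η k) (Linv (η k)) ≤ (1 / C₁B + 5 * C₂B / 4)⁻¹ *
        (Real.sqrt (L (v 0 - u) (v 0 - u))) ^ 2 * C₁B) :
    ∀ k : ℕ,
      Real.sqrt (L (v k - u) (v k - u)) ≤ Real.sqrt (L (v 0 - u) (v 0 - u)) := by
  -- basic facts about the quadratic form
  have hQ0 : ∀ w : H, 0 ≤ L w w := fun w =>
    le_trans (mul_nonneg hC₁.le (sq_nonneg _)) (hcoer w)
  set N : H → ℝ := fun w => Real.sqrt (L w w) with hN
  have hNsq : ∀ w : H, N w ^ 2 = L w w := fun w => Real.sq_sqrt (hQ0 w)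
  have hN0 : ∀ w : H, 0 ≤ N w := fun w => Real.sqrt_nonneg _
  -- Cauchy–Schwarz
  have hCS : ∀ w z : H, L w z ≤ N w * N z := by
    intro w z
    by_cases hz : z = 0
    · simp [hz, hN, mul_nonneg (Real.sqrt_nonneg _) (Real.sqrt_nonneg _)]
    · have hQz : 0 < L z z := by
        have h1 := hcoer z
        have h2 : 0 < ‖z‖ ^ 2 := pow_pos (norm_pos_iff.mpr hz) 2
        nlinarith
      have hexp : 0 ≤ (L z z) * ((L z z) * (L w w) - (L w z) ^ 2) := by
        have h := hQ0 ((L z z) • w - (L w z) • z)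
        simp only [map_sub, map_smul, ContinuousLinearMap.sub_apply,
          ContinuousLinearMap.smul_apply, smul_eq_mul] at h
        rw [hsym z w] at h
        nlinarith [h]
      have hsq : (L w z) ^ 2 ≤ L w w * L z z := by
        nlinarith [hexp, hQz]
      calc L w z ≤ |L w z| := le_abs_self _
        _ = Real.sqrt ((L w z) ^ 2) := (Real.sqrt_sq_eq_abs _).symm
        _ ≤ Real.sqrt (L w w * L z z) := Real.sqrt_le_sqrt hsq
        _ = N w * N z := Real.sqrt_mul (hQ0 w) _
  -- triangle inequality
  have htri : ∀ w z : H, N (w + z) ≤ N w + N z := by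
    intro w z
    have hexp : L (w + z) (w + z) = L w w + 2 * L w z + L z z := by
      simp only [map_add, ContinuousLinearMap.add_apply]
      rw [hsym z w]; ring
    have h1 : L (w + z) (w + z) ≤ (N w + N z) ^ 2 := by
      rw [hexp]
      nlinarith [hCS w z, hNsq w, hNsq z]
    calc N (w + z) = Real.sqrt (L (w + z) (w + z)) := rfl
      _ ≤ Real.sqrt ((N w + N z) ^ 2) := Real.sqrt_le_sqrt h1
      _ = N w + N z := Real.sqrt_sq (by positivity)
  have hs1 : s ≤ C₂B := le_trans hstep (min_le_left _ _)
  have hs2 : s * C₁B ≤ 1 := by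
    have h := le_trans hstep (min_le_right _ _)
    rw [le_div_iff₀ hC₁B] at h; exact h
  set d₀ : ℝ := Real.sqrt (L (v 0 - u) (v 0 - u)) with hd₀
  have hd₀0 : 0 ≤ d₀ := Real.sqrt_nonneg _
  have hd₀sq : d₀ ^ 2 = L (v 0 - u) (v 0 - u) := Real.sq_sqrt (hQ0 _)
  intro k
  induction k with
  | zero => exact le_refl _
  | succ k ih =>
    set e : H := v k - u with he
    set g : H →L[ℝ] ℝ := δG (v k) with hg
    -- dual trap at (v k, u)
    have htrap := hdualtrap (v k) u ih (by
      rw [sub_self u]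
      simpa using hd₀0)
    rw [hcrit, sub_zero] at htrap
    -- quadratic form facts
    have hP0 : 0 ≤ g (Linv g) := by
      have := hQ0 (Linv g); rwa [hLinv₁] at this
    have hQe : L e e ≤ d₀ ^ 2 := by
      have h := pow_le_pow_left₀ (hN0 e) ih 2
      rw [hNsq e] at h
      exact h
    -- expansion of the gradient step
    have hexp : L (e - s • Linv g) (e - s • Linv g)
        = L e e - 2 * s * g e + s ^ 2 * (g (Linv g)) := by
      simp only [map_sub, map_smul, ContinuousLinearMap.sub_apply,
        ContinuousLinearMap.smul_apply, smul_eq_mul, hLinv₁]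
      rw [hsym e (Linv g), hLinv₁]
      ring
    have hkey : L (e - s • Linv g) (e - s • Linv g) ≤ ((1 - s * C₁B) * d₀) ^ 2 := by
      rw [hexp]
      nlinarith [mul_le_mul_of_nonneg_left htrap (by positivity : (0:ℝ) ≤ 2 * s),
        mul_nonneg (mul_nonneg hs.le (sub_nonneg.2 hs1)) hP0,
        mul_nonneg (mul_nonneg (sub_nonneg.2 hs2) (sub_nonneg.2 hs2))
          (sub_nonneg.2 hQe),
        mul_nonneg (sq_nonneg (s * C₁B)) (hQ0 e)]
    have hA : N (e - s • Linv g) ≤ (1 - s * C₁B) * d₀ := by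
      calc N (e - s • Linv g) = Real.sqrt (L (e - s • Linv g) (e - s • Linv g)) := rfl
        _ ≤ Real.sqrt (((1 - s * C₁B) * d₀) ^ 2) := Real.sqrt_le_sqrt hkey
        _ = (1 - s * C₁B) * d₀ := Real.sqrt_sq (by nlinarith)
    -- perturbation bound
    have hKinv : (1 / C₁B + 5 * C₂B / 4)⁻¹ ≤ C₁B := by
      have h1 : (0:ℝ) < 1 / C₁B := by positivity
      have h2 : 1 / C₁B ≤ 1 / C₁B + 5 * C₂B / 4 := by nlinarith
      calc (1 / C₁B + 5 * C₂B / 4)⁻¹ ≤ (1 / C₁B)⁻¹ :=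
            inv_anti₀ h1 h2
        _ = C₁B := by rw [one_div, inv_inv]
    have hηB : (η k) (Linv (η k)) ≤ C₁B ^ 2 * d₀ ^ 2 := by
      have h := hpert k
      have hd2 : (0:ℝ) ≤ d₀ ^ 2 := sq_nonneg _
      calc (η k) (Linv (η k)) ≤ (1 / C₁B + 5 * C₂B / 4)⁻¹ * d₀ ^ 2 * C₁B := h
        _ ≤ C₁B * d₀ ^ 2 * C₁B :=
            mul_le_mul_of_nonneg_right
              (mul_le_mul_of_nonneg_right hKinv hd2) hC₁B.le
        _ = C₁B ^ 2 * d₀ ^ 2 := by ring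
    have hBexp : L (-(s • Linv (η k))) (-(s • Linv (η k)))
        = s ^ 2 * ((η k) (Linv (η k))) := by
      simp only [map_neg, map_smul, ContinuousLinearMap.neg_apply,
        ContinuousLinearMap.smul_apply, smul_eq_mul, hLinv₁]
      ring
    have hB : N (-(s • Linv (η k))) ≤ s * C₁B * d₀ := by
      have h1 : L (-(s • Linv (η k))) (-(s • Linv (η k))) ≤ (s * C₁B * d₀) ^ 2 := by
        rw [hBexp]
        nlinarith [sq_nonneg s]
      calc N (-(s • Linv (η k))) ≤ Real.sqrt ((s * C₁B * d₀) ^ 2) :=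
            Real.sqrt_le_sqrt h1
        _ = s * C₁B * d₀ := Real.sqrt_sq (by positivity)
    -- combine
    have hsplit : v (k + 1) - u = (e - s • Linv g) + (-(s • Linv (η k))) := by
      rw [hiter k, map_add, smul_add, he, hg]
      abel
    calc Real.sqrt (L (v (k + 1) - u) (v (k + 1) - u))
        = N ((e - s • Linv g) + (-(s • Linv (η k)))) := by rw [hsplit]
      _ ≤ N (e - s • Linv g) + N (-(s • Linv (η k))) := htri _ _
      _ ≤ (1 - s * C₁B) * d₀ + s * C₁B * d₀ := add_le_add hA hB
      _ = d₀ := by ring
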